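/- arXiv:1706.00102 — 2 statements merged into one kernel-verified Lean document; each statement's English description precedes it below -/
import Mathlib

section
/- Let z = r·e^(iθ) with e^(-2π) < r < 1 and δ = log(1/r). For any ζ = e^(it) with δ/2 ≤ t - θ ≤ δ, the Poisson kernel satisfies P_z(ζ) = (1/(2π))·(1 - r²)/|ζ - z|² ≥ 1/(32πδ). -/
/-!
Writing `s = t - θ` and `δ = log (1 / r)`, one has `|ζ - z|² = (1 - r)² + 2r(1 - cos s) ≤ (1 - r)² + r s²`,
and both `1 - r` and `s` are at most `δ`, so `|ζ - z|² ≤ 2δ²`. It remains to see `δ ≤ 8(1 - r²)`: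
for `r ≤ 2/5` this follows from `δ < 2π`, and for `r > 2/5` from `δ ≤ 1/r - 1`.
-/

open Real Complex

theorem norm_exp_mul_I_sub_ofReal_mul_exp_mul_I_sq (r θ t : ℝ) :
    ‖exp (t * I) - r * exp (θ * I)‖ ^ 2 = (1 - r) ^ 2 + 2 * r * (1 - Real.cos (t - θ)) := by
  have hfactor : exp (t * I) - r * exp (θ * I) = exp (θ * I) * (exp ((t - θ : ℝ) * I) - r) := by
    rw [mul_sub, ← Complex.exp_add]
    push_cast
    ring_nf
  rw [hfactor, norm_mul, Complex.norm_exp_ofReal_mul_I, one_mul, Complex.sq_norm,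
    Complex.normSq_apply, Complex.exp_mul_I]
  simp only [← Complex.ofReal_cos, ← Complex.ofReal_sin, Complex.sub_re, Complex.add_re,
    Complex.sub_im, Complex.add_im, Complex.mul_re, Complex.mul_im, Complex.ofReal_re,
    Complex.ofReal_im, Complex.I_re, Complex.I_im]
  nlinarith [Real.sin_sq_add_cos_sq (t - θ)]

theorem two_mul_one_sub_cos_le_sq (s : ℝ) : 2 * (1 - Real.cos s) ≤ s ^ 2 := by
  linarith [Real.one_sub_sq_div_two_le_cos (x := s)]

theorem log_one_div_le_eight_mul_one_sub_sq {r : ℝ} (hr2 : Real.exp (-(2 * π)) < r) (hr1 : r < 1) :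
    Real.log (1 / r) ≤ 8 * (1 - r ^ 2) := by
  have hr0 : 0 < r := (Real.exp_pos _).trans hr2
  rcases le_or_gt r (2 / 5) with hsmall | hlarge
  · have hδ : Real.log (1 / r) < 2 * π := by
      rw [one_div, Real.log_inv, neg_lt, ← Real.log_exp (-(2 * π))]
      exact Real.log_lt_log (Real.exp_pos _) hr2
    nlinarith [Real.pi_lt_d2]
  · have hδ : Real.log (1 / r) ≤ 1 / r - 1 := Real.log_le_sub_one_of_pos (by positivity)
    have hδr : Real.log (1 / r) * r ≤ 1 - r := by
      calc Real.log (1 / r) * r ≤ (1 / r - 1) * r := by gcongr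
        _ = 1 - r := by field_simp
    nlinarith [mul_nonneg (sub_nonneg.2 hr1.le) (by nlinarith : (0 : ℝ) ≤ 8 * r * (1 + r) - 1)]

theorem poisson_kernel_lower_bound (r θ t : ℝ) (hr2 : Real.exp (-(2 * π)) < r) (hr1 : r < 1)
    (hδ1 : Real.log (1 / r) / 2 ≤ t - θ) (hδ2 : t - θ ≤ Real.log (1 / r)) :
    1 / (32 * π * Real.log (1 / r)) ≤
      (1 / (2 * π)) * (1 - r ^ 2) /
        ‖Complex.exp (t * Complex.I) - r * Complex.exp (θ * Complex.I)‖ ^ 2 := by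
  set δ := Real.log (1 / r)
  have hr0 : 0 < r := (Real.exp_pos _).trans hr2
  have hδ0 : 0 < δ := Real.log_pos (one_lt_one_div hr0 hr1)
  have hs0 : 0 ≤ t - θ := by linarith
  have h1r : 1 - r ≤ δ := by
    have h := Real.one_sub_inv_le_log_of_pos (one_div_pos.2 hr0)
    rwa [inv_div, div_one] at h
  have hD : ‖exp (t * I) - r * exp (θ * I)‖ ^ 2 ≤ 2 * δ ^ 2 := by
    rw [norm_exp_mul_I_sub_ofReal_mul_exp_mul_I_sq]
    nlinarith [two_mul_one_sub_cos_le_sq (t - θ), mul_le_mul hδ2 hδ2 hs0 hδ0.le,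
      mul_le_mul h1r h1r (by linarith) hδ0.le]
  have hD0 : 0 < ‖exp (t * I) - r * exp (θ * I)‖ ^ 2 := by
    rw [norm_exp_mul_I_sub_ofReal_mul_exp_mul_I_sq]
    nlinarith [two_mul_one_sub_cos_le_sq (t - θ), Real.cos_le_one (t - θ)]
  have hδ8 : δ ≤ 8 * (1 - r ^ 2) := log_one_div_le_eight_mul_one_sub_sq hr2 hr1
  calc 1 / (32 * π * δ) = 1 / (2 * π) * (δ / 8) / (2 * δ ^ 2) := by field_simp; ring
    _ ≤ 1 / (2 * π) * (1 - r ^ 2) / ‖exp (t * I) - r * exp (θ * I)‖ ^ 2 := by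
      gcongr ?_ * ?_ / ?_
      · exact mul_nonneg (by positivity) (by nlinarith)
      · linarith
end

section
/- The winding map W : ℂ → ℂ, W(r·e^(iθ)) = r·e^(2iθ) (equivalently W(z) = z²/|z| for z ≠ 0, W(0) = 0), is 2-Lipschitz on ℂ. -/
open Real Complex

noncomputable def windingMap (z : ℂ) : ℂ := z ^ 2 / (‖z‖ : ℂ)

/-!
Since `‖windingMap z‖ = ‖z‖`, the case where `z` or `w` is `0` is immediate. Otherwise, clearing
the denominator `‖z‖‖w‖` reduces the claim to `‖‖w‖z² - ‖z‖w²‖ ≤ 2‖z - w‖‖z‖‖w‖`. After squaring,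
both sides are polynomials in `‖z‖`, `‖w‖` and `p = Re (z w̄)` (because `Re ((z w̄)²) = 2p² - ‖z‖²‖w‖²`),
and the right side exceeds the left by `‖z‖‖w‖ (4 (p - ‖z‖‖w‖)² + 3 ‖z‖‖w‖ (‖z‖ - ‖w‖)²) ≥ 0`.
-/

open ComplexConjugate

lemma norm_windingMap (z : ℂ) : ‖windingMap z‖ = ‖z‖ := by
  rcases eq_or_ne z 0 with rfl | hz
  · simp [windingMap]
  · rw [windingMap, norm_div, norm_pow, norm_real, norm_norm, sq, mul_div_assoc,
      div_self (norm_ne_zero_iff.mpr hz), mul_one]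

@[simp]
lemma windingMap_zero : windingMap 0 = 0 := by simp [windingMap]

lemma windingMap_sub_windingMap {z w : ℂ} (hz : z ≠ 0) (hw : w ≠ 0) :
    windingMap z - windingMap w = (‖w‖ * z ^ 2 - ‖z‖ * w ^ 2) / (‖z‖ * ‖w‖) := by
  have hz' : (‖z‖ : ℂ) ≠ 0 := ofReal_ne_zero.mpr (norm_ne_zero_iff.mpr hz)
  have hw' : (‖w‖ : ℂ) ≠ 0 := ofReal_ne_zero.mpr (norm_ne_zero_iff.mpr hw)
  rw [windingMap, windingMap]
  field_simp

lemma norm_mul_sq_sub_mul_sq_le (z w : ℂ) :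
    ‖(‖w‖ : ℂ) * z ^ 2 - ‖z‖ * w ^ 2‖ ≤ 2 * ‖z - w‖ * (‖z‖ * ‖w‖) := by
  have hc : (z * conj w).re ^ 2 + (z * conj w).im ^ 2 = (‖z‖ * ‖w‖) ^ 2 := by
    rw [← norm_conj w, ← norm_mul, Complex.sq_norm, normSq_apply]; ring
  have hcross : (‖w‖ * z ^ 2 * conj (‖z‖ * w ^ 2)).re
      = ‖z‖ * ‖w‖ * ((z * conj w).re ^ 2 - (z * conj w).im ^ 2) := by
    have : (‖w‖ : ℂ) * z ^ 2 * conj (‖z‖ * w ^ 2) = (‖z‖ * ‖w‖ : ℝ) * (z * conj w) ^ 2 := by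
      simp only [map_mul, map_pow, conj_ofReal]; push_cast; ring
    rw [this, re_ofReal_mul, sq, mul_re]; ring
  refine le_of_sq_le_sq ?_ (by positivity)
  rw [mul_pow, mul_pow, Complex.sq_norm, Complex.sq_norm, normSq_sub, normSq_sub, hcross,
    map_mul, map_mul, map_pow, map_pow, normSq_ofReal, normSq_ofReal, ← Complex.sq_norm,
    ← Complex.sq_norm]
  have hzw : 0 ≤ ‖z‖ * ‖w‖ := by positivity
  nlinarith [mul_nonneg hzw (sq_nonneg ((z * conj w).re - ‖z‖ * ‖w‖)),
    mul_nonneg (mul_nonneg hzw hzw) (sq_nonneg (‖z‖ - ‖w‖))]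

theorem windingMap_lipschitz : LipschitzWith 2 windingMap := by
  refine LipschitzWith.of_dist_le_mul fun z w => ?_
  rw [NNReal.coe_ofNat, dist_eq_norm, dist_eq_norm]
  rcases eq_or_ne w 0 with rfl | hw
  · rw [windingMap_zero, sub_zero, sub_zero, norm_windingMap]
    linarith [norm_nonneg z]
  rcases eq_or_ne z 0 with rfl | hz
  · rw [windingMap_zero, zero_sub, zero_sub, norm_neg, norm_neg, norm_windingMap]
    linarith [norm_nonneg w]
  rw [windingMap_sub_windingMap hz hw, norm_div, norm_mul, norm_real, norm_real, norm_norm,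
    norm_norm, div_le_iff₀ (mul_pos (norm_pos_iff.mpr hz) (norm_pos_iff.mpr hw))]
  exact norm_mul_sq_sub_mul_sq_le z w
end
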